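/- Assume the kernel matrix K = (exp(−c_{ij}/2))_{i,j} is positive definite. Then for every f ∈ ℝ^d the function α ↦ ⟨α, f⟩ − Ω_C(α) has a unique maximizer over △^d, the function α ↦ Φ_C(α, f) has a unique minimizer over △^d, and these two points of △^d coincide (this common point is the geometric softmax g-softmax(f)). -/

import Mathlib

open Finset Real Filter

noncomputable section

/-- The probability simplex in `ℝ^d`. -/
def simplexS (d : ℕ) : Set (Fin d → ℝ) := stdSimplex ℝ (Fin d)

/-- Transport plans between `α` and `β`: nonnegative matrices with prescribed marginals,
supported where `α i * β j > 0`. -/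
def couplings {d : ℕ} (α β : Fin d → ℝ) : Set (Matrix (Fin d) (Fin d) ℝ) :=
  {p | (∀ i j, 0 ≤ p i j) ∧ (∀ i, ∑ j, p i j = α i) ∧ (∀ j, ∑ i, p i j = β j) ∧
    ∀ i j, α i * β j = 0 → p i j = 0}

/-- The entropy-regularized transport cost of a plan `p` (with the convention `0 log 0 = 0`,
which holds automatically since `Real.log 0 = 0`). -/
def OTcost {d : ℕ} (C : Matrix (Fin d) (Fin d) ℝ) (ε : ℝ) (α β : Fin d → ℝ)
    (p : Matrix (Fin d) (Fin d) ℝ) : ℝ :=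
  (∑ i, ∑ j, p i j * C i j) + ε * ∑ i, ∑ j, p i j * Real.log (p i j / (α i * β j))

/-- Entropy-regularized optimal transport cost `OT_{C,ε}(α,β)`. -/
def OT {d : ℕ} (C : Matrix (Fin d) (Fin d) ℝ) (ε : ℝ) (α β : Fin d → ℝ) : ℝ :=
  sInf (OTcost C ε α β '' couplings α β)

/-- The Sinkhorn negentropy `Ω_C(α) = -(1/2) OT_{C,2}(α,α)`. -/
def Omega {d : ℕ} (C : Matrix (Fin d) (Fin d) ℝ) (α : Fin d → ℝ) : ℝ :=
  -(1 / 2) * OT C 2 α α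

open scoped Classical

/-- `Φ_C(α,f) = Σ_{i,j} α_i α_j exp(-(f_i + f_j + c_{ij})/2)`. -/
def Phi {d : ℕ} (C : Matrix (Fin d) (Fin d) ℝ) (α f : Fin d → ℝ) : ℝ :=
  ∑ i, ∑ j, α i * α j * Real.exp (-(f i + f j + C i j) / 2)

/-- The geometric log-sum-exp `Ω_C^*(f) = -log min_{α ∈ △^d} Φ_C(α, f)`. -/
def OmegaStar {d : ℕ} (C : Matrix (Fin d) (Fin d) ℝ) (f : Fin d → ℝ) : ℝ :=
  -Real.log (sInf ((fun α => Phi C α f) '' simplexS d))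

/-- The geometric softmax: the (unique, when the kernel is positive definite) minimizer of
`Φ_C(·, f)` over the simplex. -/
def gsoftmax {d : ℕ} (C : Matrix (Fin d) (Fin d) ℝ) (f : Fin d → ℝ) : Fin d → ℝ :=
  if h : ∃ α ∈ simplexS d, IsMinOn (fun β => Phi C β f) (simplexS d) α
  then h.choose else fun _ => 0

/-- The soft C-transform `T(f,α)_i = -2 log Σ_j α_j exp((f_j - c_{ij})/2)`. -/
def Tsoft {d : ℕ} (C : Matrix (Fin d) (Fin d) ℝ) (f α : Fin d → ℝ) : Fin d → ℝ :=
  fun i => -2 * Real.log (∑ j, α j * Real.exp ((f j - C i j) / 2))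

/-- `f` is the symmetric Sinkhorn potential of `α`: `-f = T(-f, α)`. -/
def IsSinkhornPotential {d : ℕ} (C : Matrix (Fin d) (Fin d) ℝ) (α f : Fin d → ℝ) : Prop :=
  -f = Tsoft C (-f) α

/-- The symmetric Sinkhorn potential `∇Ω(α)`: the (unique, when the kernel is positive
definite) `f` with `-f = T(-f, α)`. -/
def gradOmega {d : ℕ} (C : Matrix (Fin d) (Fin d) ℝ) (α : Fin d → ℝ) : Fin d → ℝ :=
  if h : ∃ f : Fin d → ℝ, IsSinkhornPotential C α f then h.choose else fun _ => 0

/-- The extrapolation `f^E = -T(-(f - Ω_C^*(f)·1), g-softmax(f)) + Ω_C^*(f)·1`. -/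
def extrap {d : ℕ} (C : Matrix (Fin d) (Fin d) ℝ) (f : Fin d → ℝ) : Fin d → ℝ :=
  fun i => -(Tsoft C (fun j => -(f j - OmegaStar C f)) (gsoftmax C f) i) + OmegaStar C f

/-- The kernel matrix `K = (exp(-c_{ij}/2))_{ij}`. -/
def kernelK {d : ℕ} (C : Matrix (Fin d) (Fin d) ℝ) : Matrix (Fin d) (Fin d) ℝ :=
  Matrix.of fun i j => Real.exp (-(C i j) / 2)

/-! Write `F β = ⟨β, f⟩ - Ω_C(β) = ⟨β, f⟩ + OT_{C,2}(β, β) / 2`. For every potential `g`, the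
entropic cost of a coupling `p` of `β` with itself is `2 KL(p ‖ q_g) - 2 ⟨β, g⟩ - 2 log Φ_C(β, g)`,
where `q_g ∝ β_i β_j exp(-(g_i + g_j + c_ij) / 2)` is the Gibbs plan; hence
`F β ≥ -log Φ_C(β, f)`. Conversely `β` has a symmetric Sinkhorn potential `g`, for which `q_g` is
itself a coupling, so that `F β ≤ ⟨β, f - g⟩`; it is read off a solution `u ≥ 0` of
`u_i (K u)_i = β_i`, found on the support of `β` by minimizing the coercive function
`s ↦ ⟨e^s, K e^s⟩ / 2 - ⟨β, s⟩`. Tilting `β` by `exp ((f - g) / 2)` gives `γ` in the simplex with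
`⟨β, f - g⟩ = -log Φ_C(γ, f) - 2 KL(β ‖ γ)`. So `F β ≤ -log min Φ_C(·, f)`, with equality only
if `β = γ` minimizes `Φ_C(·, f)`, and that minimizer is unique because positive definiteness of
`K` makes `Φ_C(·, f)` strictly convex. -/

open Matrix

theorem sub_le_mul_log_div {p q : ℝ} (hp : 0 ≤ p) (hq : 0 ≤ q) (hpq : q = 0 → p = 0) :
    p - q ≤ p * log (p / q) := by
  rcases hp.eq_or_lt with rfl | hp
  · simpa using hq
  have hq : 0 < q := hq.lt_of_ne fun h => hp.ne' (hpq h.symm)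
  have := one_sub_inv_le_log_of_pos (div_pos hp hq)
  rw [inv_div] at this
  calc p - q = p * (1 - q / p) := by field_simp
    _ ≤ p * log (p / q) := by gcongr

theorem eq_of_mul_log_div_eq_sub {p q : ℝ} (hp : 0 ≤ p) (hq : 0 ≤ q) (hpq : q = 0 → p = 0)
    (h : p * log (p / q) = p - q) : p = q := by
  rcases hp.eq_or_lt with rfl | hp
  · simp_all
  have hq : 0 < q := hq.lt_of_ne fun h => hp.ne' (hpq h.symm)
  by_contra hne
  have := log_lt_sub_one_of_pos (div_pos hq hp)
    (by rw [ne_eq, div_eq_one_iff_eq hp.ne']; exact Ne.symm hne)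
  rw [← inv_div, log_inv, inv_div] at this
  have : p * (1 - q / p) < p * log (p / q) := mul_lt_mul_of_pos_left (by linarith) hp
  rw [h] at this
  field_simp at this
  linarith

theorem sum_mul_log_div_nonneg {ι : Type*} [Fintype ι] {p q : ι → ℝ} (hp : 0 ≤ p) (hq : 0 ≤ q)
    (hpq : ∀ i, q i = 0 → p i = 0) (hsum : ∑ i, q i ≤ ∑ i, p i) :
    0 ≤ ∑ i, p i * log (p i / q i) := by
  have := sum_le_sum fun i (_ : i ∈ univ) => sub_le_mul_log_div (hp i) (hq i) (hpq i)
  rw [sum_sub_distrib] at this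
  linarith

theorem eq_of_sum_mul_log_div_eq_zero {ι : Type*} [Fintype ι] {p q : ι → ℝ} (hp : 0 ≤ p)
    (hq : 0 ≤ q) (hpq : ∀ i, q i = 0 → p i = 0) (hsum : ∑ i, q i = ∑ i, p i)
    (h : ∑ i, p i * log (p i / q i) = 0) : p = q := by
  have hgap := (sum_eq_zero_iff_of_nonneg fun i _ =>
    sub_nonneg.2 (sub_le_mul_log_div (hp i) (hq i) (hpq i))).1
      (by rw [sum_sub_distrib, h, sum_sub_distrib, hsum, sub_self, sub_self])
  exact funext fun i => eq_of_mul_log_div_eq_sub (hp i) (hq i) (hpq i)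
    (sub_eq_zero.1 (hgap i (mem_univ i)))

theorem isMaxOn_unique_of_forall_exists_le {X : Type*} {S : Set X} {F G : X → ℝ} {α : X}
    (hα : α ∈ S) (hGmax : IsMaxOn G S α) (hGuniq : ∀ β ∈ S, IsMaxOn G S β → β = α)
    (hle : G α ≤ F α) (hge : ∀ β ∈ S, ∃ γ ∈ S, F β ≤ G γ ∧ (F β = G γ → γ = β)) :
    IsMaxOn F S α ∧ ∀ β ∈ S, IsMaxOn F S β → β = α := by
  refine ⟨fun β hβ => ?_, fun β hβ hβmax => ?_⟩
  · obtain ⟨γ, hγ, hFG, -⟩ := hge β hβ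
    exact hFG.trans ((hGmax hγ).trans hle)
  · obtain ⟨γ, hγ, hFG, hγβ⟩ := hge β hβ
    have hFα : F α ≤ F β := hβmax hα
    have hGγ : G γ ≤ G α := hGmax hγ
    have hFGeq : F β = G γ := le_antisymm hFG (by linarith)
    obtain rfl := hγβ hFGeq
    exact hGuniq γ hγ (isMaxOn_iff.2 fun x hx => (isMaxOn_iff.1 hGmax x hx).trans (by linarith))

theorem isMaxOn_neg_log_iff {X : Type*} {S : Set X} {φ : X → ℝ} (hφ : ∀ x ∈ S, 0 < φ x) {a : X}
    (ha : a ∈ S) : IsMaxOn (fun x => -log (φ x)) S a ↔ IsMinOn φ S a := by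
  simp only [isMaxOn_iff, isMinOn_iff, neg_le_neg_iff]
  exact forall₂_congr fun x hx => log_le_log_iff (hφ a ha) (hφ x hx)

theorem tendsto_mul_exp_sq_sub_mul_cocompact {a b : ℝ} (ha : 0 < a) (hb : 0 < b) :
    Tendsto (fun x => a * exp x ^ 2 - b * x) (cocompact ℝ) atTop := by
  rw [cocompact_eq_atBot_atTop, tendsto_sup]
  constructor
  · refine tendsto_atTop_mono (fun x => ?_) (tendsto_neg_atBot_atTop.const_mul_atTop hb)
    nlinarith [sq_nonneg (exp x)]
  · refine tendsto_atTop_mono (fun x => ?_) (tendsto_exp_atTop.atTop_mul_atTop₀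
      (tendsto_atTop_add_const_right _ (-b) (tendsto_exp_atTop.const_mul_atTop ha)))
    nlinarith [add_one_le_exp x]

theorem tendsto_sum_comp_eval_cocompact {ι : Type*} [Fintype ι] {ψ : ι → ℝ → ℝ}
    (hcont : ∀ i, Continuous (ψ i)) (hψ : ∀ i, Tendsto (ψ i) (cocompact ℝ) atTop) :
    Tendsto (fun s : ι → ℝ => ∑ i, ψ i (s i)) (cocompact (ι → ℝ)) atTop := by
  choose m hm using fun i => (hcont i).exists_forall_le (hψ i)
  rw [← coprodᵢ_cocompact, Filter.coprodᵢ, tendsto_iSup]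
  intro i
  refine tendsto_atTop_mono (fun s => ?_) (tendsto_atTop_add_const_right _
    (∑ j, ψ j (m j) - ψ i (m i)) ((hψ i).comp tendsto_comap))
  have := single_le_sum (f := fun j => ψ j (s j) - ψ j (m j)) (fun j _ => sub_nonneg.2 (hm j _))
    (mem_univ i)
  simp only [sum_sub_distrib] at this
  simp only [Function.comp_apply]
  linarith

section SymmetricScaling

variable {ι : Type*} [Fintype ι] {K : Matrix ι ι ℝ}

theorem sum_diag_mul_sq_le_dotProduct_mulVec (hK0 : ∀ i j, 0 ≤ K i j) {x : ι → ℝ} (hx : 0 ≤ x) :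
    ∑ i, K i i * x i ^ 2 ≤ x ⬝ᵥ K *ᵥ x := by
  refine sum_le_sum fun i _ => ?_
  rw [mulVec, dotProduct, mul_sum]
  calc K i i * x i ^ 2 = x i * (K i i * x i) := by ring
    _ ≤ ∑ j, x i * (K i j * x j) :=
      single_le_sum (f := fun j => x i * (K i j * x j))
        (fun j _ => mul_nonneg (hx i) (mul_nonneg (hK0 i j) (hx j))) (mem_univ i)

theorem dotProduct_mulVec_add_single [DecidableEq ι] (hK : K.IsSymm) (u : ι → ℝ) (i : ι)
    (c : ℝ) : (u + Pi.single i c) ⬝ᵥ K *ᵥ (u + Pi.single i c) =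
      u ⬝ᵥ K *ᵥ u + 2 * c * (K *ᵥ u) i + c ^ 2 * K i i := by
  have hsymm : u ᵥ* K = K *ᵥ u := by simpa [hK.eq] using vecMul_transpose K u
  have hcross : u ⬝ᵥ K *ᵥ Pi.single i c = c * (K *ᵥ u) i := by
    rw [dotProduct_mulVec, hsymm, dotProduct_single, mul_comm]
  have hdiag : (K *ᵥ Pi.single i c) i = K i i * c := by
    simp only [mulVec, dotProduct_single]
  rw [mulVec_add, dotProduct_add, add_dotProduct, add_dotProduct, hcross, single_dotProduct,
    single_dotProduct, hdiag]
  ring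

theorem dotProduct_mulVec_smul_add_smul (K : Matrix ι ι ℝ) (u v : ι → ℝ) {a b : ℝ}
    (hab : a + b = 1) : (a • u + b • v) ⬝ᵥ K *ᵥ (a • u + b • v) =
      a * (u ⬝ᵥ K *ᵥ u) + b * (v ⬝ᵥ K *ᵥ v) - a * b * ((u - v) ⬝ᵥ K *ᵥ (u - v)) := by
  obtain rfl : b = 1 - a := by linarith
  simp only [mulVec_add, mulVec_smul, mulVec_sub, add_dotProduct, dotProduct_add, smul_dotProduct,
    dotProduct_smul, sub_dotProduct, dotProduct_sub, smul_eq_mul]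
  ring

variable (K) in
def sinkhornObjective (β s : ι → ℝ) : ℝ :=
  (exp ∘ s) ⬝ᵥ K *ᵥ (exp ∘ s) / 2 - β ⬝ᵥ s

theorem continuous_sinkhornObjective (β : ι → ℝ) : Continuous (sinkhornObjective K β) := by
  unfold sinkhornObjective
  fun_prop

theorem tendsto_sinkhornObjective_cocompact (hK0 : ∀ i j, 0 ≤ K i j) (hKd : ∀ i, 0 < K i i)
    {β : ι → ℝ} (hβ : ∀ i, 0 < β i) :
    Tendsto (sinkhornObjective K β) (cocompact (ι → ℝ)) atTop := by
  refine tendsto_atTop_mono (fun s => ?_) (tendsto_sum_comp_eval_cocompact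
    (ψ := fun i x => K i i / 2 * exp x ^ 2 - β i * x) (fun i => by fun_prop)
    (fun i => tendsto_mul_exp_sq_sub_mul_cocompact (half_pos (hKd i)) (hβ i)))
  have := sum_diag_mul_sq_le_dotProduct_mulVec hK0 (x := exp ∘ s) fun i => (exp_pos _).le
  simp only [sinkhornObjective, sum_sub_distrib, dotProduct, Function.comp_apply] at this ⊢
  simp only [div_mul_eq_mul_div, ← sum_div]
  linarith

theorem exp_mul_mulVec_exp_eq_of_forall_le (hK : K.IsSymm) {β s : ι → ℝ}
    (hs : ∀ t, sinkhornObjective K β s ≤ sinkhornObjective K β t) (i : ι) :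
    exp (s i) * (K *ᵥ (exp ∘ s)) i = β i := by
  set u := exp ∘ s
  have hshift : ∀ t, exp ∘ (s + Pi.single i t) = u + Pi.single i (u i * (exp t - 1)) := by
    intro t; funext j
    by_cases hj : j = i
    · subst hj
      simp only [u, Function.comp_apply, Pi.add_apply, Pi.single_eq_same, exp_add]
      ring
    · simp [u, hj]
  have hφ : (fun t => sinkhornObjective K β (s + Pi.single i t)) = fun t =>
      (u ⬝ᵥ K *ᵥ u + 2 * (u i * (exp t - 1)) * (K *ᵥ u) i + (u i * (exp t - 1)) ^ 2 * K i i) / 2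
        - β ⬝ᵥ s - β i * t := by
    funext t
    simp only [sinkhornObjective, hshift, dotProduct_mulVec_add_single hK, dotProduct_add,
      dotProduct_single]
    ring
  have hg : HasDerivAt (fun t => u i * (exp t - 1)) (u i) 0 := by
    simpa using ((hasDerivAt_exp 0).sub_const 1).const_mul (u i)
  have hderiv : HasDerivAt (fun t => sinkhornObjective K β (s + Pi.single i t))
      (u i * (K *ᵥ u) i - β i) 0 := by
    rw [hφ]
    refine ((((((hg.const_mul (2:ℝ)).mul_const ((K *ᵥ u) i)).const_add (u ⬝ᵥ K *ᵥ u)).add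
      ((hg.fun_pow 2).mul_const (K i i))).div_const 2).sub_const (β ⬝ᵥ s)).sub
      ((hasDerivAt_id 0).const_mul (β i)) |>.congr_deriv ?_
    simp only [exp_zero, sub_self, mul_zero, mul_one, pow_one, zero_mul, add_zero, Nat.cast_ofNat,
      Nat.add_one_sub_one]
    ring
  have hmin : IsLocalMin (fun t => sinkhornObjective K β (s + Pi.single i t)) 0 :=
    Eventually.of_forall fun t => by simpa using hs _
  exact sub_eq_zero.1 (hmin.hasDerivAt_eq_zero hderiv)

theorem exists_pos_mul_mulVec_eq_of_pos (hK : K.IsSymm) (hK0 : ∀ i j, 0 ≤ K i j)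
    (hKd : ∀ i, 0 < K i i) {β : ι → ℝ} (hβ : ∀ i, 0 < β i) :
    ∃ u : ι → ℝ, (∀ i, 0 < u i) ∧ ∀ i, u i * (K *ᵥ u) i = β i := by
  obtain ⟨s, hs⟩ := (continuous_sinkhornObjective β).exists_forall_le
    (tendsto_sinkhornObjective_cocompact hK0 hKd hβ)
  exact ⟨exp ∘ s, fun i => exp_pos _, exp_mul_mulVec_exp_eq_of_forall_le hK hs⟩

theorem exists_nonneg_mul_mulVec_eq (hK : K.IsSymm) (hK0 : ∀ i j, 0 ≤ K i j)
    (hKd : ∀ i, 0 < K i i) {β : ι → ℝ} (hβ : 0 ≤ β) :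
    ∃ u : ι → ℝ, 0 ≤ u ∧ ∀ i, u i * (K *ᵥ u) i = β i := by
  obtain ⟨v, hvpos, hv⟩ := exists_pos_mul_mulVec_eq_of_pos
    (K := K.submatrix ((↑) : {i // 0 < β i} → ι) (↑)) (hK.submatrix _) (fun _ _ => hK0 _ _)
    (fun _ => hKd _) (β := fun i => β i) Subtype.prop
  set u : ι → ℝ := fun i => if h : 0 < β i then v ⟨i, h⟩ else 0
  have hKu : ∀ i, (K *ᵥ u) i = ∑ j : {j // 0 < β j}, K i j * v j := fun i =>
    sum_congr_set {j | 0 < β j} _ _ (fun j (hj : 0 < β j) => by simp [u, hj])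
      (fun j (hj : ¬0 < β j) => by simp [u, hj])
  refine ⟨u, fun i => ?_, fun i => ?_⟩
  · by_cases h : 0 < β i <;> simp [u, h, (hvpos _).le]
  · by_cases h : 0 < β i
    · rw [hKu]
      simpa [u, h, mulVec, dotProduct] using hv ⟨i, h⟩
    · rw [show u i = 0 from dif_neg h, zero_mul]
      exact (le_antisymm (not_lt.1 h) (hβ i)).symm

end SymmetricScaling

section SinkhornNegentropy

variable {d : ℕ} {C : Matrix (Fin d) (Fin d) ℝ}

theorem exists_pos_of_mem_simplexS {α : Fin d → ℝ} (hα : α ∈ simplexS d) : ∃ i, 0 < α i := by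
  by_contra! h
  have := hα.2
  rw [sum_eq_zero fun i _ => le_antisymm (h i) (hα.1 i)] at this
  exact zero_ne_one this

theorem sum_mul_pos_of_mem_simplexS {α x : Fin d → ℝ} (hα : α ∈ simplexS d)
    (hx : ∀ i, 0 < x i) : 0 < ∑ i, α i * x i := by
  obtain ⟨k, hk⟩ := exists_pos_of_mem_simplexS hα
  exact sum_pos' (fun i _ => mul_nonneg (hα.1 i) (hx i).le) ⟨k, mem_univ k, mul_pos hk (hx k)⟩

theorem kernelK_pos (C : Matrix (Fin d) (Fin d) ℝ) (i j : Fin d) : 0 < kernelK C i j := exp_pos _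

theorem kernelK_isSymm (hC : C.IsSymm) : (kernelK C).IsSymm := by
  ext i j
  simp [kernelK, hC.apply]

theorem phi_eq_dotProduct_mulVec (C : Matrix (Fin d) (Fin d) ℝ) (α f : Fin d → ℝ) :
    Phi C α f = (fun i => α i * exp (-f i / 2)) ⬝ᵥ kernelK C *ᵥ fun i => α i * exp (-f i / 2) := by
  simp only [Phi, dotProduct, mulVec, kernelK, of_apply, mul_sum]
  refine sum_congr rfl fun i _ => sum_congr rfl fun j _ => ?_
  rw [show -(f i + f j + C i j) / 2 = -f i / 2 + (-C i j / 2 + -f j / 2) by ring, exp_add, exp_add]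
  ring

theorem phi_pos {α : Fin d → ℝ} (hα : α ∈ simplexS d) (f : Fin d → ℝ) : 0 < Phi C α f := by
  obtain ⟨i, hi⟩ := exists_pos_of_mem_simplexS hα
  have hnonneg : ∀ i j, 0 ≤ α i * α j * exp (-(f i + f j + C i j) / 2) := fun i j =>
    mul_nonneg (mul_nonneg (hα.1 i) (hα.1 j)) (exp_pos _).le
  exact sum_pos' (fun i _ => sum_nonneg fun j _ => hnonneg i j)
    ⟨i, mem_univ i, sum_pos' (fun j _ => hnonneg i j) ⟨i, mem_univ i, by positivity⟩⟩

theorem strictConvexOn_phi (hK : (kernelK C).PosDef) (f : Fin d → ℝ) :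
    StrictConvexOn ℝ (simplexS d) fun α => Phi C α f := by
  refine ⟨convex_stdSimplex ℝ _, fun x _ y _ hxy a b ha hb hab => ?_⟩
  set w : (Fin d → ℝ) → Fin d → ℝ := fun α i => α i * exp (-f i / 2)
  have hw : w (a • x + b • y) = a • w x + b • w y := by
    funext i; simp only [w, Pi.add_apply, Pi.smul_apply, smul_eq_mul]; ring
  have hne : w x - w y ≠ 0 := fun h => hxy <| funext fun i =>
    mul_right_cancel₀ (exp_pos _).ne' (sub_eq_zero.1 (congrFun h i))
  have hpos := hK.dotProduct_mulVec_pos hne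
  rw [star_trivial] at hpos
  simp only [phi_eq_dotProduct_mulVec, smul_eq_mul]
  rw [show (fun i => (a • x + b • y) i * exp (-f i / 2)) = a • w x + b • w y from hw,
    dotProduct_mulVec_smul_add_smul _ _ _ hab]
  have : 0 < a * b * ((w x - w y) ⬝ᵥ kernelK C *ᵥ (w x - w y)) := by positivity
  linarith

theorem exists_isMinOn_phi (hd : 1 ≤ d) (C : Matrix (Fin d) (Fin d) ℝ) (f : Fin d → ℝ) :
    ∃ α ∈ simplexS d, IsMinOn (fun β => Phi C β f) (simplexS d) α :=
  (isCompact_stdSimplex ℝ (Fin d)).exists_isMinOn ⟨_, single_mem_stdSimplex ℝ ⟨0, hd⟩⟩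
    (by unfold Phi; fun_prop)

def gibbsPlan (C : Matrix (Fin d) (Fin d) ℝ) (β g : Fin d → ℝ) : Matrix (Fin d) (Fin d) ℝ :=
  of fun i j => β i * β j * exp (-(g i + g j + C i j) / 2) / Phi C β g

theorem sum_sum_gibbsPlan {β : Fin d → ℝ} (hβ : β ∈ simplexS d) (g : Fin d → ℝ) :
    ∑ i, ∑ j, gibbsPlan C β g i j = 1 := by
  simp only [gibbsPlan, of_apply, ← sum_div]
  exact div_self (phi_pos hβ g).ne'

theorem sum_sum_mul_add_of_mem_couplings {α β : Fin d → ℝ} {p : Matrix (Fin d) (Fin d) ℝ}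
    (hp : p ∈ couplings α β) (a b : Fin d → ℝ) :
    ∑ i, ∑ j, p i j * (a i + b j) = ∑ i, α i * a i + ∑ j, β j * b j := by
  simp only [mul_add, sum_add_distrib]
  rw [sum_comm (f := fun i j => p i j * b j)]
  simp only [← sum_mul, hp.2.1, hp.2.2.1]

theorem OTcost_eq_of_mem_couplings {β : Fin d → ℝ} (hβ : β ∈ simplexS d) (g : Fin d → ℝ)
    {p : Matrix (Fin d) (Fin d) ℝ} (hp : p ∈ couplings β β) :
    OTcost C 2 β β p = 2 * ∑ i, ∑ j, p i j * log (p i j / gibbsPlan C β g i j)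
      - 2 * ∑ i, β i * g i - 2 * log (Phi C β g) := by
  have hΦ := phi_pos (C := C) hβ g
  have key : ∀ i j, p i j * C i j + 2 * (p i j * log (p i j / (β i * β j))) =
      2 * (p i j * log (p i j / gibbsPlan C β g i j))
        - p i j * ((g i + 2 * log (Phi C β g)) + g j) := by
    intro i j
    rcases (hp.1 i j).eq_or_lt with h | h
    · simp [← h]
    have hββ : β i * β j ≠ 0 := fun h0 => h.ne' (hp.2.2.2 i j h0)
    rw [gibbsPlan, of_apply, log_div h.ne' hββ, log_div h.ne' (by positivity),
      log_div (by positivity) hΦ.ne', log_mul hββ (exp_pos _).ne', log_exp]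
    ring
  have hmass : ∑ i, ∑ j, p i j * ((g i + 2 * log (Phi C β g)) + g j) =
      2 * ∑ i, β i * g i + 2 * log (Phi C β g) := by
    rw [sum_sum_mul_add_of_mem_couplings hp]
    simp only [mul_add, sum_add_distrib, ← sum_mul, hβ.2]
    ring
  calc OTcost C 2 β β p = ∑ i, ∑ j, (p i j * C i j + 2 * (p i j * log (p i j / (β i * β j)))) := by
        simp only [OTcost, mul_sum, ← sum_add_distrib]
    _ = _ := by
        simp only [key, sum_sub_distrib, ← mul_sum, hmass]
        ring

theorem le_OTcost {β : Fin d → ℝ} (hβ : β ∈ simplexS d) (g : Fin d → ℝ)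
    {p : Matrix (Fin d) (Fin d) ℝ} (hp : p ∈ couplings β β) :
    -2 * ∑ i, β i * g i - 2 * log (Phi C β g) ≤ OTcost C 2 β β p := by
  have hq0 : ∀ i j, 0 ≤ gibbsPlan C β g i j := fun i j =>
    div_nonneg (mul_nonneg (mul_nonneg (hβ.1 i) (hβ.1 j)) (exp_pos _).le) (phi_pos hβ g).le
  have hsupp : ∀ x : Fin d × Fin d, gibbsPlan C β g x.1 x.2 = 0 → p x.1 x.2 = 0 := by
    intro x hx
    refine hp.2.2.2 _ _ ?_
    simpa [gibbsPlan, (phi_pos (C := C) hβ g).ne', (exp_pos _).ne'] using hx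
  have hmass : ∑ x : Fin d × Fin d, p x.1 x.2 = 1 := by
    rw [Fintype.sum_prod_type]
    simp only [hp.2.1, hβ.2]
  have hKL := sum_mul_log_div_nonneg (p := fun x : Fin d × Fin d => p x.1 x.2)
    (fun x => hp.1 x.1 x.2) (fun x => hq0 x.1 x.2) hsupp
    (by rw [hmass, Fintype.sum_prod_type, sum_sum_gibbsPlan hβ])
  rw [Fintype.sum_prod_type] at hKL
  rw [OTcost_eq_of_mem_couplings hβ g hp]
  linarith

theorem mem_couplings_self {β : Fin d → ℝ} (hβ : β ∈ simplexS d) :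
    (of fun i j => β i * β j) ∈ couplings β β :=
  ⟨fun i j => mul_nonneg (hβ.1 i) (hβ.1 j), fun i => by simp [← mul_sum, hβ.2],
    fun j => by simp [← sum_mul, hβ.2], fun _ _ h => h⟩

theorem le_OT {β : Fin d → ℝ} (hβ : β ∈ simplexS d) (g : Fin d → ℝ) :
    -2 * ∑ i, β i * g i - 2 * log (Phi C β g) ≤ OT C 2 β β :=
  le_csInf ⟨_, Set.mem_image_of_mem _ (mem_couplings_self hβ)⟩
    (Set.forall_mem_image.2 fun _ hp => le_OTcost hβ g hp)

theorem neg_log_phi_le {β : Fin d → ℝ} (hβ : β ∈ simplexS d) (f : Fin d → ℝ) :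
    -log (Phi C β f) ≤ (∑ i, β i * f i) - Omega C β := by
  have := le_OT (C := C) hβ f
  simp only [Omega]
  linarith

theorem IsSinkhornPotential.sum_mul_exp_eq_one {β g : Fin d → ℝ} (hβ : β ∈ simplexS d)
    (hg : IsSinkhornPotential C β g) (i : Fin d) :
    ∑ j, β j * exp (-(g i + g j + C i j) / 2) = 1 := by
  set S := ∑ j, β j * exp ((-g j - C i j) / 2)
  have hS : 0 < S := sum_mul_pos_of_mem_simplexS hβ fun _ => exp_pos _
  have hlog : log S = g i / 2 := by
    have := congrFun hg i
    simp only [Tsoft, Pi.neg_apply] at this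
    linarith
  calc ∑ j, β j * exp (-(g i + g j + C i j) / 2) = exp (-(g i / 2)) * S := by
        rw [mul_sum]
        refine sum_congr rfl fun j _ => ?_
        rw [show -(g i + g j + C i j) / 2 = -(g i / 2) + (-g j - C i j) / 2 by ring, exp_add]
        ring
    _ = 1 := by rw [← hlog, exp_neg, exp_log hS, inv_mul_cancel₀ hS.ne']

theorem IsSinkhornPotential.phi_eq_one {β g : Fin d → ℝ} (hβ : β ∈ simplexS d)
    (hg : IsSinkhornPotential C β g) : Phi C β g = 1 := by
  simp only [Phi, mul_assoc, ← mul_sum, hg.sum_mul_exp_eq_one hβ, mul_one, hβ.2]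

theorem IsSinkhornPotential.gibbsPlan_mem_couplings (hC : C.IsSymm) {β g : Fin d → ℝ}
    (hβ : β ∈ simplexS d) (hg : IsSinkhornPotential C β g) :
    gibbsPlan C β g ∈ couplings β β := by
  have hrow : ∀ i, ∑ j, gibbsPlan C β g i j = β i := fun i => by
    simp only [gibbsPlan, of_apply, hg.phi_eq_one hβ, div_one, mul_assoc, ← mul_sum,
      hg.sum_mul_exp_eq_one hβ, mul_one]
  refine ⟨fun i j => ?_, hrow, fun j => ?_, fun i j h => ?_⟩
  · exact div_nonneg (mul_nonneg (mul_nonneg (hβ.1 i) (hβ.1 j)) (exp_pos _).le)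
      (phi_pos hβ g).le
  · rw [← hrow j]
    refine sum_congr rfl fun i _ => ?_
    simp only [gibbsPlan, of_apply, hC.apply i j]
    ring_nf
  · simp [gibbsPlan, h]

theorem IsSinkhornPotential.OT_le (hC : C.IsSymm) {β g : Fin d → ℝ} (hβ : β ∈ simplexS d)
    (hg : IsSinkhornPotential C β g) : OT C 2 β β ≤ -2 * ∑ i, β i * g i := by
  have hp := hg.gibbsPlan_mem_couplings hC hβ
  have hcost : OTcost C 2 β β (gibbsPlan C β g) = -2 * ∑ i, β i * g i := by
    rw [OTcost_eq_of_mem_couplings hβ g hp, hg.phi_eq_one hβ]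
    simp
  exact hcost ▸ csInf_le ⟨_, Set.forall_mem_image.2 fun _ hp => le_OTcost hβ 0 hp⟩
    (Set.mem_image_of_mem _ hp)

theorem exists_isSinkhornPotential (hC : C.IsSymm) {β : Fin d → ℝ} (hβ : β ∈ simplexS d) :
    ∃ g, IsSinkhornPotential C β g := by
  obtain ⟨u, hu0, hu⟩ := exists_nonneg_mul_mulVec_eq (kernelK_isSymm hC)
    (fun i j => (kernelK_pos C i j).le) (fun i => kernelK_pos C i i) hβ.1
  have hKu : ∀ i, 0 < (kernelK C *ᵥ u) i := by
    obtain ⟨k, hk⟩ := exists_pos_of_mem_simplexS hβ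
    have huk : 0 < u k := (hu0 k).lt_of_ne fun h => hk.ne' (by simp [← hu k, ← h])
    exact fun i => sum_pos' (fun j _ => mul_nonneg (kernelK_pos C i j).le (hu0 j))
      ⟨k, mem_univ k, mul_pos (kernelK_pos C i k) huk⟩
  refine ⟨fun i => 2 * log ((kernelK C *ᵥ u) i), funext fun i => ?_⟩
  have hterm : ∀ j, β j * exp ((-(2 * log ((kernelK C *ᵥ u) j)) - C i j) / 2) =
      kernelK C i j * u j := fun j => by
    rw [show (-(2 * log ((kernelK C *ᵥ u) j)) - C i j) / 2 =
      -log ((kernelK C *ᵥ u) j) + -C i j / 2 by ring, exp_add, Real.exp_neg, exp_log (hKu j),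
      ← hu j, show kernelK C i j = exp (-C i j / 2) from rfl]
    field_simp [(hKu j).ne']
  simp only [Tsoft, Pi.neg_apply, hterm, neg_mul]
  rfl

def expTilt (β h : Fin d → ℝ) : Fin d → ℝ :=
  fun i => β i * exp (h i / 2) / ∑ j, β j * exp (h j / 2)

theorem sum_mul_exp_pos {β : Fin d → ℝ} (hβ : β ∈ simplexS d) (h : Fin d → ℝ) :
    0 < ∑ j, β j * exp (h j / 2) :=
  sum_mul_pos_of_mem_simplexS hβ fun _ => exp_pos _

theorem expTilt_mem_simplexS {β : Fin d → ℝ} (hβ : β ∈ simplexS d) (h : Fin d → ℝ) :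
    expTilt β h ∈ simplexS d :=
  ⟨fun i => div_nonneg (mul_nonneg (hβ.1 i) (exp_pos _).le) (sum_mul_exp_pos hβ h).le, by
    simp only [expTilt, ← sum_div]
    exact div_self (sum_mul_exp_pos hβ h).ne'⟩

theorem phi_expTilt {β : Fin d → ℝ} (hβ : β ∈ simplexS d) (f h : Fin d → ℝ) :
    Phi C (expTilt β h) f = Phi C β (f - h) / (∑ j, β j * exp (h j / 2)) ^ 2 := by
  have hE := (sum_mul_exp_pos hβ h).ne'
  simp only [Phi, expTilt, sum_div, Pi.sub_apply]
  refine sum_congr rfl fun i _ => sum_congr rfl fun j _ => ?_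
  rw [show -(f i - h i + (f j - h j) + C i j) / 2 =
    h i / 2 + (h j / 2 + -(f i + f j + C i j) / 2) by ring, exp_add, exp_add]
  field_simp

theorem sum_mul_log_div_expTilt {β : Fin d → ℝ} (hβ : β ∈ simplexS d) (h : Fin d → ℝ) :
    ∑ i, β i * log (β i / expTilt β h i) =
      log (∑ j, β j * exp (h j / 2)) - (∑ i, β i * h i) / 2 := by
  have hE := (sum_mul_exp_pos hβ h).ne'
  have hterm : ∀ i, β i * log (β i / expTilt β h i) =
      β i * log (∑ j, β j * exp (h j / 2)) - β i * h i / 2 := fun i => by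
    rcases (hβ.1 i).eq_or_lt with hi | hi
    · simp [← hi]
    rw [expTilt, div_div_eq_mul_div, mul_div_mul_left _ _ hi.ne', log_div hE (exp_pos _).ne',
      log_exp]
    ring
  simp only [hterm, sum_sub_distrib, ← sum_mul, hβ.2, one_mul, ← sum_div]

theorem exists_le_neg_log_phi (hC : C.IsSymm) {β : Fin d → ℝ} (hβ : β ∈ simplexS d)
    (f : Fin d → ℝ) : ∃ γ ∈ simplexS d,
      (∑ i, β i * f i) - Omega C β ≤ -log (Phi C γ f) ∧
      ((∑ i, β i * f i) - Omega C β = -log (Phi C γ f) → γ = β) := by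
  obtain ⟨g, hg⟩ := exists_isSinkhornPotential hC hβ
  set γ := expTilt β (f - g)
  have hγ := expTilt_mem_simplexS hβ (f - g)
  have hE := sum_mul_exp_pos hβ (f - g)
  have hΦγ : -log (Phi C γ f) = 2 * log (∑ j, β j * exp ((f - g) j / 2)) := by
    rw [phi_expTilt hβ, sub_sub_cancel, hg.phi_eq_one hβ, one_div, log_inv, log_pow]
    push_cast
    ring
  have hsupp : ∀ i, γ i = 0 → β i = 0 := fun i hi =>
    (mul_eq_zero.1 ((div_eq_zero_iff.1 hi).resolve_right hE.ne')).resolve_right (exp_pos _).ne'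
  have hmass : ∑ i, γ i = ∑ i, β i := by rw [hγ.2, hβ.2]
  have hKL := sum_mul_log_div_nonneg hβ.1 hγ.1 hsupp hmass.le
  have hKLeq := sum_mul_log_div_expTilt hβ (f - g)
  have hOT := hg.OT_le hC hβ
  have hF : (∑ i, β i * f i) - Omega C β ≤ ∑ i, β i * (f - g) i := by
    simp only [Omega, Pi.sub_apply, mul_sub, sum_sub_distrib]
    linarith
  exact ⟨γ, hγ, by linarith, fun heq =>
    (eq_of_sum_mul_log_div_eq_zero hβ.1 hγ.1 hsupp hmass (by linarith)).symm⟩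

end SinkhornNegentropy

theorem gsoftmax_unique_max_min_coincide (d : ℕ) (hd : 1 ≤ d)
    (C : Matrix (Fin d) (Fin d) ℝ) (hCsym : C.IsSymm)
    (hK : (kernelK C).PosDef) (f : Fin d → ℝ) :
    (∃! α, α ∈ simplexS d ∧
        IsMaxOn (fun β => (∑ i, β i * f i) - Omega C β) (simplexS d) α) ∧
    (∃! α, α ∈ simplexS d ∧ IsMinOn (fun β => Phi C β f) (simplexS d) α) ∧
    ∀ a b : Fin d → ℝ,
      a ∈ simplexS d → IsMaxOn (fun β => (∑ i, β i * f i) - Omega C β) (simplexS d) a →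
      b ∈ simplexS d → IsMinOn (fun β => Phi C β f) (simplexS d) b →
      a = b := by
  obtain ⟨α, hα, hαmin⟩ := exists_isMinOn_phi hd C f
  have hmin_unique : ∀ β ∈ simplexS d, IsMinOn (fun β => Phi C β f) (simplexS d) β → β = α :=
    fun β hβ hβmin => (strictConvexOn_phi hK f).eq_of_isMinOn hβmin hαmin hβ hα
  have hΦpos : ∀ β ∈ simplexS d, 0 < Phi C β f := fun β hβ => phi_pos hβ f
  obtain ⟨hαmax, hmax_unique⟩ := isMaxOn_unique_of_forall_exists_le hα
    ((isMaxOn_neg_log_iff hΦpos hα).2 hαmin)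
    (fun β hβ h => hmin_unique β hβ ((isMaxOn_neg_log_iff hΦpos hβ).1 h))
    (neg_log_phi_le hα f) (fun β hβ => exists_le_neg_log_phi hCsym hβ f)
  exact ⟨⟨α, ⟨hα, hαmax⟩, fun β hβ => hmax_unique β hβ.1 hβ.2⟩,
    ⟨α, ⟨hα, hαmin⟩, fun β hβ => hmin_unique β hβ.1 hβ.2⟩,
    fun a b ha hamax hb hbmin => (hmax_unique a ha hamax).trans (hmin_unique b hb hbmin).symm⟩
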